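/- There is no Lie algebra automorphism Ψ of g₅ satisfying all of: Ψ(W) = εW for some ε ∈ {1, −1}; Ψ(Y₁) ∈ 2ε₁Y₁ + span{Y₂, Z, W} for some ε₁ ∈ {1, −1}; and Ψ(Y₂) ∈ ε₂Y₂ + span{Z, W} for some ε₂ ∈ {1, −1}. -/

import Mathlib

/-! Since W = [Y₁, Y₂], an automorphism Ψ gives εW = Ψ W = [Ψ Y₁, Ψ Y₂]. The prescribed shapes
make Ψ Y₁ and Ψ Y₂ have no X₁-component, Ψ Y₂ no Y₁-component, and leading coefficients 2ε₁ and
ε₂, so the W-component of [Ψ Y₁, Ψ Y₂] is 2ε₁ε₂. Hence ε = 2ε₁ε₂, impossible as |ε| = 1. -/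

noncomputable section

/-- The bracket of the Lie algebra g₅ on ℝ⁵ with basis X₁,Y₁,Y₂,Z,W at coordinates 0,…,4. -/
def br5 (u v : Fin 5 → ℝ) : Fin 5 → ℝ :=
  ![0, 0, 0,
    u 0 * v 1 - u 1 * v 0,
    u 0 * v 3 - u 3 * v 0 + (u 1 * v 2 - u 2 * v 1)]

def Y1 : Fin 5 → ℝ := Pi.single 1 1
def Y2 : Fin 5 → ℝ := Pi.single 2 1
def Zv : Fin 5 → ℝ := Pi.single 3 1
def Wv : Fin 5 → ℝ := Pi.single 4 1

theorem apply_eq_of_sub_mem_span {R ι : Type*} [Ring R] {s : Set (ι → R)} {i : ι}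
    (hs : ∀ z ∈ s, z i = 0) {x y : ι → R} (hxy : x - y ∈ Submodule.span R s) : x i = y i := by
  have hker : x - y ∈ LinearMap.ker (LinearMap.proj i : (ι → R) →ₗ[R] R) :=
    Submodule.span_le.mpr (fun z hz ↦ hs z hz) hxy
  simpa [sub_eq_zero] using hker

theorem br5_Y1_Y2 : br5 Y1 Y2 = Wv := by
  funext i
  fin_cases i <;> simp [br5, Y1, Y2, Wv]

theorem br5_apply_four (u v : Fin 5 → ℝ) :
    br5 u v 4 = u 0 * v 3 - u 3 * v 0 + (u 1 * v 2 - u 2 * v 1) :=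
  rfl

/-- There is no Lie algebra automorphism Ψ of g₅ with Ψ(W) = ±W,
Ψ(Y₁) ∈ ±2Y₁ + span{Y₂,Z,W}, and Ψ(Y₂) ∈ ±Y₂ + span{Z,W}. -/
theorem stmt12 :
    ¬ ∃ (Ψ : (Fin 5 → ℝ) → (Fin 5 → ℝ)) (ε ε₁ ε₂ : ℝ),
      IsLinearMap ℝ Ψ ∧ Function.Bijective Ψ ∧
      (∀ u v, Ψ (br5 u v) = br5 (Ψ u) (Ψ v)) ∧
      (ε = 1 ∨ ε = -1) ∧ (ε₁ = 1 ∨ ε₁ = -1) ∧ (ε₂ = 1 ∨ ε₂ = -1) ∧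
      Ψ Wv = ε • Wv ∧
      Ψ Y1 - (2 * ε₁) • Y1 ∈ Submodule.span ℝ {Y2, Zv, Wv} ∧
      Ψ Y2 - ε₂ • Y2 ∈ Submodule.span ℝ {Zv, Wv} := by
  rintro ⟨Ψ, ε, ε₁, ε₂, -, -, hbr, hε, hε₁, hε₂, hW, h1, h2⟩
  have hY1_0 : Ψ Y1 0 = 0 := by
    simpa [Y1] using apply_eq_of_sub_mem_span (i := 0) (by simp [Y2, Zv, Wv]) h1
  have hY1_1 : Ψ Y1 1 = 2 * ε₁ := by
    simpa [Y1] using apply_eq_of_sub_mem_span (i := 1) (by simp [Y2, Zv, Wv]) h1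
  have hY2_0 : Ψ Y2 0 = 0 := by
    simpa [Y2] using apply_eq_of_sub_mem_span (i := 0) (by simp [Zv, Wv]) h2
  have hY2_1 : Ψ Y2 1 = 0 := by
    simpa [Y2] using apply_eq_of_sub_mem_span (i := 1) (by simp [Zv, Wv]) h2
  have hY2_2 : Ψ Y2 2 = ε₂ := by
    simpa [Y2] using apply_eq_of_sub_mem_span (i := 2) (by simp [Zv, Wv]) h2
  have hε_eq : ε = 2 * ε₁ * ε₂ := by
    have h := congrFun (hbr Y1 Y2) 4
    rw [br5_Y1_Y2, hW, br5_apply_four, hY1_0, hY1_1, hY2_0, hY2_1, hY2_2] at h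
    simpa [Wv] using h
  rcases hε with rfl | rfl <;> rcases hε₁ with rfl | rfl <;> rcases hε₂ with rfl | rfl <;>
    norm_num at hε_eq
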